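/- Let H₃ be the 3N × n_v·N matrix with block rows [1, …, 1], [x^{i₁}, …, x^{i_{n_v}}], [x^{j₁}, …, x^{j_{n_v}}] of N × N circulant permutation matrices with i₁ = j₁ = 0. Then girth(H₃) > 4 if and only if each of the three sets {i₁, …, i_{n_v}}, {j₁, …, j_{n_v}}, {i₁ − j₁, …, i_{n_v} − j_{n_v}} consists of pairwise distinct residues modulo N. -/

import Mathlib

open Matrix

/-- The permutation matrix (over ℕ) associated with a permutation. -/
def permMatrix {N : ℕ} (σ : Equiv.Perm (Fin N)) : Matrix (Fin N) (Fin N) ℕ :=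
  Matrix.of fun i j => if σ i = j then 1 else 0

/-- The Tanner graph of an ℕ-valued matrix: the bipartite simple graph on rows ⊕ columns
with an edge between row `i` and column `j` whenever `M i j ≠ 0`. -/
def tanner {α β : Type*} (M : Matrix α β ℕ) : SimpleGraph (α ⊕ β) :=
  SimpleGraph.fromRel fun u v => ∃ i j, u = Sum.inl i ∧ v = Sum.inr j ∧ M i j ≠ 0

open Classical in
/-- The girth of the Tanner (multi)graph of an ℕ-valued matrix: an entry `≥ 2` is a
multiple edge, giving girth `2`; otherwise the girth of the Tanner simple graph
(`⊤` if there is no cycle). -/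
noncomputable def matGirth {α β : Type*} (M : Matrix α β ℕ) : ℕ∞ :=
  if ∃ i j, 2 ≤ M i j then 2 else (tanner M).egirth

/-- The `N × N` circulant permutation matrix with shift `r` (mod `N`):
entry `(i, j)` equals `1` iff `j ≡ i + r (mod N)`. -/
def circ (N : ℕ) (r : ZMod N) : Matrix (Fin N) (Fin N) ℕ :=
  Matrix.of fun i j => if ((j : ℕ) : ZMod N) = ((i : ℕ) : ZMod N) + r then 1 else 0

/-- The block matrix with first block row all identities, second block row the circulants
`circ N (e j)` and third block row the circulants `circ N (f j)`. -/
def H3circ {N nv : ℕ} (e f : Fin nv → ZMod N) :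
    Matrix (Fin 3 × Fin N) (Fin nv × Fin N) ℕ :=
  Matrix.of fun p q =>
    if p.1 = 0 then (if p.2 = q.2 then 1 else 0)
    else if p.1 = 1 then circ N (e q.1) p.2 q.2
    else circ N (f q.1) p.2 q.2

/-! A 4-cycle in the Tanner graph of a matrix is the same as two rows and two columns whose
four crossing entries are nonzero; shorter cycles are impossible because the graph is bipartite.
If the matrix is made of circulant blocks `x ^ s a k`, such a rectangle through block rows
`a ≠ b` and block columns `k ≠ l` exists exactly when `s a k - s b k = s a l - s b l`: walking
around it, the shifts must add up to zero mod `N`. For `H₃` the rows of shifts are `0, e, f`,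
and the three pairs of block rows give the injectivity of `e`, `f` and `e - f`. -/

namespace SimpleGraph

variable {V : Type*} {G : SimpleGraph V}

lemma Walk.IsCycle.exists_square {u : V} {w : G.Walk u u} (hw : w.IsCycle) (h4 : w.length = 4) :
    ∃ a b c d, G.Adj a b ∧ G.Adj b c ∧ G.Adj c d ∧ G.Adj d a ∧ a ≠ c ∧ b ≠ d := by
  have hadj (k : ℕ) (hk : k < 4) : G.Adj (w.getVert k) (w.getVert (k + 1)) :=
    w.adj_getVert_succ (h4 ▸ hk)
  refine ⟨w.getVert 0, w.getVert 1, w.getVert 2, w.getVert 3, hadj 0 (by norm_num),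
    hadj 1 (by norm_num), hadj 2 (by norm_num), ?_, ?_, ?_⟩
  · simpa [← h4, Walk.getVert_length] using hadj 3 (by norm_num)
  · exact hw.getVert_sub_one_ne_getVert_add_one (i := 1) (by omega)
  · exact hw.getVert_sub_one_ne_getVert_add_one (i := 2) (by omega)

lemma egirth_le_four_of_square {a b c d : V} (hab : G.Adj a b) (hbc : G.Adj b c)
    (hcd : G.Adj c d) (hda : G.Adj d a) (hac : a ≠ c) (hbd : b ≠ d) : G.egirth ≤ 4 := by
  let w : G.Walk a a := .cons hab (.cons hbc (.cons hcd (.cons hda .nil)))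
  have hw : w.IsCycle := by
    rw [Walk.isCycle_def, Walk.isTrail_def]
    refine ⟨?_, by simp [w], ?_⟩
    · simp [w, hab.ne, hbc.ne, hcd.ne, hda.ne, hac, hac.symm, hbd, hab.ne.symm]
    · simp [w, hab.ne.symm, hbc.ne, hcd.ne, hda.ne, hbd, hac.symm]
  exact egirth_le_length hw

theorem Coloring.egirth_le_four_iff (col : G.Coloring Bool) :
    G.egirth ≤ 4 ↔ ∃ a b c d, G.Adj a b ∧ G.Adj b c ∧ G.Adj c d ∧ G.Adj d a ∧ a ≠ c ∧ b ≠ d := by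
  constructor
  · intro h
    have hcyc : ¬ G.IsAcyclic := fun hacyc => by simp [hacyc.egirth_eq_top] at h
    obtain ⟨u, w, hw, hlen⟩ := exists_egirth_eq_length.mpr hcyc
    have heven : Even w.length := (col.even_length_iff_congr w).mpr Iff.rfl
    have h3 := hw.three_le_length
    have : w.length ≤ 4 := by exact_mod_cast hlen ▸ h
    exact hw.exists_square (by obtain ⟨r, hr⟩ := heven; omega)
  · rintro ⟨a, b, c, d, hab, hbc, hcd, hda, hac, hbd⟩
    exact egirth_le_four_of_square hab hbc hcd hda hac hbd

end SimpleGraph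

section Tanner

variable {α β : Type*} (M : Matrix α β ℕ)

@[simp]
lemma tanner_adj_inl_inr {i : α} {j : β} : (tanner M).Adj (.inl i) (.inr j) ↔ M i j ≠ 0 := by
  simp [tanner]

@[simp]
lemma tanner_adj_inr_inl {i : α} {j : β} : (tanner M).Adj (.inr j) (.inl i) ↔ M i j ≠ 0 := by
  simp [tanner]

@[simp]
lemma not_tanner_adj_inl_inl {i i' : α} : ¬ (tanner M).Adj (.inl i) (.inl i') := by
  simp [tanner]

@[simp]
lemma not_tanner_adj_inr_inr {j j' : β} : ¬ (tanner M).Adj (.inr j) (.inr j') := by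
  simp [tanner]

def tannerColoring : (tanner M).Coloring Bool :=
  SimpleGraph.Coloring.mk Sum.isLeft fun {u v} huv => by
    rcases u with _ | _ <;> rcases v with _ | _ <;> simp_all

def HasNonzeroRectangle : Prop :=
  ∃ i i' j j', i ≠ i' ∧ j ≠ j' ∧ M i j ≠ 0 ∧ M i j' ≠ 0 ∧ M i' j ≠ 0 ∧ M i' j' ≠ 0

variable {M}

lemma hasNonzeroRectangle_of_square {a b c d : α ⊕ β} (hab : (tanner M).Adj a b)
    (hbc : (tanner M).Adj b c) (hcd : (tanner M).Adj c d) (hda : (tanner M).Adj d a)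
    (hac : a ≠ c) (hbd : b ≠ d) : HasNonzeroRectangle M := by
  wlog ha : a.isLeft generalizing a b c d
  · exact this hbc hcd hda hab hbd hac.symm <| by
      rcases a with _ | _ <;> rcases b with _ | _ <;> simp_all
  rcases a with i | _ <;> rcases b with _ | j <;> rcases c with i' | _ <;>
    rcases d with _ | j' <;> simp_all
  exact ⟨i, i', j, j', hac, hbd, hab, hda, hbc, hcd⟩

theorem four_lt_egirth_tanner_iff : 4 < (tanner M).egirth ↔ ¬ HasNonzeroRectangle M := by
  rw [← not_le, (tannerColoring M).egirth_le_four_iff]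
  refine not_congr ⟨fun ⟨a, b, c, d, hab, hbc, hcd, hda, hac, hbd⟩ =>
    hasNonzeroRectangle_of_square hab hbc hcd hda hac hbd, ?_⟩
  rintro ⟨i, i', j, j', hi, hj, hij, hij', hi'j, hi'j'⟩
  exact ⟨.inl i, .inr j, .inl i', .inr j', by simpa, by simpa, by simpa, by simpa,
    by simpa, by simpa⟩

end Tanner

lemma Fin.natCast_zmod_inj {N : ℕ} {x y : Fin N} :
    ((x : ℕ) : ZMod N) = ((y : ℕ) : ZMod N) ↔ x = y := by
  refine ⟨fun h => Fin.ext ?_, fun h => h ▸ rfl⟩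
  simpa [ZMod.val_cast_of_lt x.2, ZMod.val_cast_of_lt y.2] using congrArg ZMod.val h

lemma Fin.exists_natCast_zmod_eq {N : ℕ} [NeZero N] (z : ZMod N) :
    ∃ x : Fin N, ((x : ℕ) : ZMod N) = z :=
  ⟨⟨z.val, z.val_lt⟩, ZMod.natCast_zmod_val z⟩

lemma circ_ne_zero_iff {N : ℕ} {r : ZMod N} {x y : Fin N} :
    circ N r x y ≠ 0 ↔ ((y : ℕ) : ZMod N) = (x : ℕ) + r := by
  simp [circ]

def qcMatrix (N : ℕ) {m n : Type*} (s : m → n → ZMod N) :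
    Matrix (m × Fin N) (n × Fin N) ℕ :=
  Matrix.of fun p q => circ N (s p.1 q.1) p.2 q.2

theorem hasNonzeroRectangle_qcMatrix_iff {N : ℕ} [NeZero N] {m n : Type*}
    (s : m → n → ZMod N) :
    HasNonzeroRectangle (qcMatrix N s) ↔ ∃ a b, a ≠ b ∧ ¬ Function.Injective (s a - s b) := by
  simp only [HasNonzeroRectangle, qcMatrix, Matrix.of_apply, circ_ne_zero_iff,
    Function.not_injective_iff, Pi.sub_apply]
  constructor
  · rintro ⟨⟨a, x⟩, ⟨b, x'⟩, ⟨k, y⟩, ⟨l, y'⟩, hrow, hcol, hxy, hxy', hx'y, hx'y'⟩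
    refine ⟨a, b, fun hab => hrow ?_, k, l, by linear_combination hxy' - hxy + hx'y - hx'y',
      fun hkl => hcol ?_⟩
    · subst hab
      exact Prod.ext rfl (Fin.natCast_zmod_inj.mp (add_right_cancel (hxy.symm.trans hx'y)))
    · subst hkl
      exact Prod.ext rfl (Fin.natCast_zmod_inj.mp (hxy.trans hxy'.symm))
  · rintro ⟨a, b, hab, k, l, hkl, hkl'⟩
    obtain ⟨x, hx⟩ := Fin.exists_natCast_zmod_eq (0 : ZMod N)
    obtain ⟨x', hx'⟩ := Fin.exists_natCast_zmod_eq (s a k - s b k)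
    obtain ⟨y, hy⟩ := Fin.exists_natCast_zmod_eq (s a k)
    obtain ⟨y', hy'⟩ := Fin.exists_natCast_zmod_eq (s a l)
    refine ⟨(a, x), (b, x'), (k, y), (l, y'), fun h => hab congr(($h).1),
      fun h => hkl' congr(($h).1), ?_, ?_, ?_, ?_⟩ <;> simp only [hx, hx', hy, hy']
    · ring
    · ring
    · ring
    · linear_combination -hkl

lemma H3circ_eq_qcMatrix {N nv : ℕ} (e f : Fin nv → ZMod N) :
    H3circ e f = qcMatrix N ![0, e, f] := by
  ext ⟨a, x⟩ ⟨k, y⟩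
  fin_cases a <;> simp [H3circ, qcMatrix, circ, Fin.natCast_zmod_inj, eq_comm]

lemma Function.injective_neg_iff {ι G : Type*} [AddGroup G] {u : ι → G} :
    Function.Injective (-u) ↔ Function.Injective u :=
  neg_injective.of_comp_iff u

lemma pairwise_injective_sub_three_iff {ι G : Type*} [AddGroup G] (e f : ι → G) :
    (Pairwise fun a b : Fin 3 => Function.Injective (![0, e, f] a - ![0, e, f] b)) ↔
      Function.Injective e ∧ Function.Injective f ∧ Function.Injective (e - f) := by
  refine ⟨fun h => ⟨?_, ?_, h (i := 1) (j := 2) (by decide)⟩, ?_⟩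
  · simpa using h (i := 1) (j := 0) (by decide)
  · simpa using h (i := 2) (j := 0) (by decide)
  · rintro ⟨he, hf, hef⟩ a b hab
    have hfe : Function.Injective (f - e) := by
      rwa [← neg_sub, Function.injective_neg_iff]
    fin_cases a <;> fin_cases b <;> simp_all [Function.injective_neg_iff]

theorem stmt11_general {N nv : ℕ} (hN : 0 < N) (e f : Fin nv → ZMod N) :
    (4 : ℕ∞) < (tanner (H3circ e f)).egirth ↔
      Function.Injective e ∧ Function.Injective f ∧
        Function.Injective (fun k => e k - f k) := by
  have : NeZero N := ⟨hN.ne'⟩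
  rw [four_lt_egirth_tanner_iff, H3circ_eq_qcMatrix, hasNonzeroRectangle_qcMatrix_iff]
  push Not
  exact pairwise_injective_sub_three_iff e f

theorem stmt11 {N nv : ℕ} (hN : 0 < N) [NeZero nv] (e f : Fin nv → ZMod N)
    (h0e : e 0 = 0) (h0f : f 0 = 0) :
    (4 : ℕ∞) < (tanner (H3circ e f)).egirth ↔
      Function.Injective e ∧ Function.Injective f ∧
        Function.Injective (fun k => e k - f k) :=
  stmt11_general hN e f
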